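/- Let X ∈ ℝ^{n×n} be symmetric positive semidefinite with nonnegative entries, all row sums equal to 1, and trace(X) ≤ r. Then ‖X − X₀‖_F² ≤ 2⟨X₀ − X, X₀⟩. -/

import Mathlib

open Matrix

noncomputable section

/-- The size `m_k` of cluster `C_k = {i : z i = k}` of the partition given by `z`. -/
def clusterSize {n r : ℕ} (z : Fin n → Fin r) (k : Fin r) : ℕ :=
  (Finset.univ.filter fun i => z i = k).card

/-- The smallest cluster size `m_min`. -/
def mMin {n r : ℕ} [NeZero r] (z : Fin n → Fin r) : ℕ :=
  Finset.univ.inf' Finset.univ_nonempty (clusterSize z)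

/-- The largest cluster size `m_max`. -/
def mMax {n r : ℕ} [NeZero r] (z : Fin n → Fin r) : ℕ :=
  Finset.univ.sup' Finset.univ_nonempty (clusterSize z)

/-- The ground-truth clustering matrix `X₀`, `(X₀)_{ij} = 1/m_k` if `i,j ∈ C_k`, else `0`. -/
def groundTruth {n r : ℕ} (z : Fin n → Fin r) : Matrix (Fin n) (Fin n) ℝ :=
  Matrix.of fun i j => if z i = z j then ((clusterSize z (z i) : ℝ))⁻¹ else 0

/-- Trace inner product `⟨A, B⟩ = trace (Aᵀ B) = ∑_{ij} A_{ij} B_{ij}`. -/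
def ip {n : ℕ} (A B : Matrix (Fin n) (Fin n) ℝ) : ℝ := ∑ i, ∑ j, A i j * B i j

/-- Squared Frobenius norm `‖A‖_F²`. -/
def frobSq {m k : ℕ} (A : Matrix (Fin m) (Fin k) ℝ) : ℝ := ∑ i, ∑ j, (A i j) ^ 2

/-- The feasible set `F` of the SDP: `X ⪰ 0`, `0 ≤ X_{ij} ≤ 1/m_min`, all row sums `1`,
`trace X = r`. -/
def feasSet {n r : ℕ} [NeZero r] (z : Fin n → Fin r) (X : Matrix (Fin n) (Fin n) ℝ) : Prop :=
  X.PosSemidef ∧ (∀ i j, 0 ≤ X i j) ∧ (∀ i j, X i j ≤ ((mMin z : ℝ))⁻¹) ∧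
    (∀ i, ∑ j, X i j = 1) ∧ X.trace = (r : ℝ)

/-- Minimum of a real-valued function over the (nonempty) index set `Fin r`. -/
def rMin {r : ℕ} [NeZero r] (f : Fin r → ℝ) : ℝ :=
  Finset.univ.inf' Finset.univ_nonempty f

/-!
Because `X` is symmetric with nonnegative entries and unit row sums, its quadratic form is
dominated by `‖v‖²` (as `vᵀ(1 - X)v = ½ ∑ᵢⱼ Xᵢⱼ (vᵢ - vⱼ)²`), so `1 - X ⪰ 0`. Together with
`X ⪰ 0` this gives `‖X‖_F² = trace X² ≤ trace X ≤ r = ‖X₀‖_F²`, and the claim follows from the identity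
`‖X - X₀‖_F² = ‖X‖_F² - ‖X₀‖_F² + 2⟨X₀ - X, X₀⟩`.
-/

open scoped MatrixOrder ComplexOrder in
theorem Matrix.PosSemidef.trace_mul_nonneg {ι 𝕜 : Type*} [Fintype ι] [RCLike 𝕜]
    {A B : Matrix ι ι 𝕜} (hA : A.PosSemidef) (hB : B.PosSemidef) : 0 ≤ (A * B).trace := by
  classical
  set S := CFC.sqrt A
  have hS : Sᴴ = S := (CFC.sqrt_nonneg A).posSemidef.isHermitian
  calc 0 ≤ (S * B * Sᴴ).trace := (hB.mul_mul_conjTranspose_same S).trace_nonneg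
    _ = (A * B).trace := by rw [hS, trace_mul_cycle, CFC.sqrt_mul_sqrt_self A hA.nonneg]

theorem Matrix.IsHermitian.posSemidef_one_sub_of_nonneg_of_sum_eq_one {ι : Type*} [Fintype ι]
    [DecidableEq ι] {X : Matrix ι ι ℝ} (hX : X.IsHermitian) (hnn : ∀ i j, 0 ≤ X i j)
    (hrow : ∀ i, ∑ j, X i j = 1) : (1 - X).PosSemidef := by
  have hcol : ∀ j, ∑ i, X i j = 1 := fun j => by
    simpa [← hX.apply j] using hrow j
  refine .of_dotProduct_mulVec_nonneg (isHermitian_one.sub hX) fun v => ?_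
  have h1 : ∑ i, ∑ j, X i j * v i ^ 2 = ∑ i, v i ^ 2 := by
    simp [← Finset.sum_mul, hrow]
  have h2 : ∑ i, ∑ j, X i j * v j ^ 2 = ∑ j, v j ^ 2 := by
    rw [Finset.sum_comm]; simp [← Finset.sum_mul, hcol]
  have hquad : 2 * (star v ⬝ᵥ (1 - X) *ᵥ v) = ∑ i, ∑ j, X i j * (v i - v j) ^ 2 := by
    rw [sub_mulVec, one_mulVec, dotProduct_sub, star_trivial]
    have expand : ∑ i, ∑ j, X i j * (v i - v j) ^ 2 = ∑ i, ∑ j, X i j * v i ^ 2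
        + ∑ i, ∑ j, X i j * v j ^ 2 - 2 * ∑ i, v i * ∑ j, X i j * v j := by
      simp only [Finset.mul_sum, ← Finset.sum_add_distrib, ← Finset.sum_sub_distrib]
      exact Finset.sum_congr rfl fun i _ => Finset.sum_congr rfl fun j _ => by ring
    rw [expand, h1, h2]
    simp only [dotProduct, mulVec, sq]
    ring
  have hsum_nonneg : 0 ≤ ∑ i, ∑ j, X i j * (v i - v j) ^ 2 :=
    Finset.sum_nonneg fun i _ => Finset.sum_nonneg fun j _ => mul_nonneg (hnn i j) (sq_nonneg _)
  linarith

open scoped ComplexOrder in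
theorem Matrix.PosSemidef.trace_mul_self_le_trace {ι 𝕜 : Type*} [Fintype ι] [DecidableEq ι]
    [RCLike 𝕜] {X : Matrix ι ι 𝕜} (hX : X.PosSemidef) (h1X : (1 - X).PosSemidef) :
    (X * X).trace ≤ X.trace := by
  simpa [Matrix.mul_sub, trace_sub] using hX.trace_mul_nonneg h1X

theorem frobSq_eq_trace_mul_transpose {m k : ℕ} (A : Matrix (Fin m) (Fin k) ℝ) :
    frobSq A = (A * Aᵀ).trace := by
  simp [frobSq, Matrix.trace, Matrix.mul_apply, sq]

theorem ip_self {n : ℕ} (A : Matrix (Fin n) (Fin n) ℝ) : ip A A = frobSq A := by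
  simp [ip, frobSq, sq]

theorem ip_sub_left {n : ℕ} (A B C : Matrix (Fin n) (Fin n) ℝ) :
    ip (A - B) C = ip A C - ip B C := by
  simp [ip, sub_mul, Finset.sum_sub_distrib]

theorem frobSq_sub {n : ℕ} (A B : Matrix (Fin n) (Fin n) ℝ) :
    frobSq (A - B) = frobSq A - 2 * ip A B + frobSq B := by
  simp only [frobSq, ip, Matrix.sub_apply, Finset.mul_sum, ← Finset.sum_sub_distrib,
    ← Finset.sum_add_distrib]
  exact Finset.sum_congr rfl fun i _ => Finset.sum_congr rfl fun j _ => by ring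

theorem clusterSize_apply_pos {n r : ℕ} (z : Fin n → Fin r) (i : Fin n) :
    0 < clusterSize z (z i) :=
  Finset.card_pos.mpr ⟨i, by simp⟩

theorem sum_groundTruth_sq {n r : ℕ} (z : Fin n → Fin r) (i : Fin n) :
    ∑ j, groundTruth z i j ^ 2 = ((clusterSize z (z i) : ℝ))⁻¹ := by
  have hm : (clusterSize z (z i) : ℝ) ≠ 0 := by exact_mod_cast (clusterSize_apply_pos z i).ne'
  have hcard : (Finset.univ.filter fun j => z i = z j).card = clusterSize z (z i) := by
    simp only [clusterSize, eq_comm]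
  simp only [groundTruth, of_apply, ite_pow, Finset.sum_ite, Finset.sum_const, hcard,
    nsmul_eq_mul, ne_eq, OfNat.ofNat_ne_zero, not_false_eq_true, zero_pow, smul_zero, add_zero]
  field_simp

theorem frobSq_groundTruth {n r : ℕ} {z : Fin n → Fin r} (hz : Function.Surjective z) :
    frobSq (groundTruth z) = r := by
  have hcluster : ∀ k, ∑ i with z i = k, ((clusterSize z k : ℝ))⁻¹ = 1 := fun k => by
    obtain ⟨i, rfl⟩ := hz k
    have hm : (clusterSize z (z i) : ℝ) ≠ 0 := by exact_mod_cast (clusterSize_apply_pos z i).ne'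
    rw [Finset.sum_const, nsmul_eq_mul, ← clusterSize, mul_inv_cancel₀ hm]
  simp only [frobSq, sum_groundTruth_sq]
  rw [← Finset.sum_fiberwise' Finset.univ z fun k => ((clusterSize z k : ℝ))⁻¹]
  simp [hcluster]

/-- If `X` is symmetric PSD with nonnegative entries, all row sums `1`
and `trace X ≤ r`, then `‖X − X₀‖_F² ≤ 2 ⟨X₀ − X, X₀⟩`. -/
theorem frob_diff_le_ip {n r : ℕ} (z : Fin n → Fin r) (hz : Function.Surjective z)
    (X : Matrix (Fin n) (Fin n) ℝ) (hpsd : X.PosSemidef) (hnn : ∀ i j, 0 ≤ X i j)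
    (hrow : ∀ i, ∑ j, X i j = 1) (htr : X.trace ≤ (r : ℝ)) :
    frobSq (X - groundTruth z) ≤ 2 * ip (groundTruth z - X) (groundTruth z) := by
  have hXt : Xᵀ = X := by simpa using hpsd.isHermitian.eq
  have hle : frobSq X ≤ frobSq (groundTruth z) :=
    calc frobSq X = (X * X).trace := by rw [frobSq_eq_trace_mul_transpose, hXt]
      _ ≤ X.trace := hpsd.trace_mul_self_le_trace
          (hpsd.isHermitian.posSemidef_one_sub_of_nonneg_of_sum_eq_one hnn hrow)
      _ ≤ r := htr
      _ = frobSq (groundTruth z) := (frobSq_groundTruth hz).symm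
  rw [frobSq_sub, ip_sub_left, ip_self]
  linarith
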